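/- Under the stated hypotheses, suppose I ± R_x are invertible for all x in an interval (x₀, ∞), and suppose the function V(x) = −C(exp(−xA)·(I − R_x²)⁻¹·exp(−xA)·b) is integrable on (x₀, ∞). Then U(x) = exp(2·∫_x^∞ V(t) dt) is twice differentiable on (x₀, ∞) and satisfies the Schrödinger-type equation U″(x) = −4·a(x)·U(x), where a(x) = C(exp(−xA)·(I+R_x)⁻¹·A·(I+R_x)⁻¹·exp(−xA)·b). -/

import Mathlib

open MeasureTheory

/-- The semigroup `exp(-tA)` generated by a bounded operator `A`. -/
noncomputable def expA {H : Type*} [NormedAddCommGroup H] [InnerProductSpace ℂ H]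
    [CompleteSpace H] (A : H →L[ℂ] H) (t : ℝ) : H →L[ℂ] H :=
  NormedSpace.exp ((-(t : ℂ)) • A)

/-- `R_x = ∫_x^∞ exp(-tA)·BC·exp(-tA) dt` as a Bochner integral. -/
noncomputable def Rop {H : Type*} [NormedAddCommGroup H] [InnerProductSpace ℂ H]
    [CompleteSpace H] (A : H →L[ℂ] H) (BC : H →L[ℂ] H) (x : ℝ) : H →L[ℂ] H :=
  ∫ t in Set.Ioi x, expA A t * BC * expA A t

/-!
Write `E = exp(-xA)`, `R = R_x`, `S = (1 - R²)⁻¹`, `P = (1 + R)⁻¹` and `F = E·BC·E`.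
Then `R' = -F`, and integrating the derivative of `t ↦ exp(-tA)·BC·exp(-tA)` gives the
Lyapunov equation `AR + RA = F`. With it, the ring identity
`AS + SA + S(FR + RF)S = 2(PAP + SFS)` turns the derivative of `ESE` into `-2E(PAP + SFS)E`.
Applying `C(· b)` and splitting the rank-one `BC` gives the Riccati equation `V' = 2a + 2V²`,
and then `U' = -2VU` and `U'' = -4aU`.
-/

open Filter Set Topology Asymptotics

theorem hasDerivAt_setIntegral_Ioi {E : Type*} [NormedAddCommGroup E] [NormedSpace ℝ E]
    [CompleteSpace E] {g : ℝ → E} {a x : ℝ} (hg : IntegrableOn g (Ioi a)) (hax : a < x)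
    (hgx : ContinuousAt g x) :
    HasDerivAt (fun y => ∫ t in Ioi y, g t) (-g x) x := by
  have hprim : HasDerivAt (fun y => ∫ t in a..y, g t) (g x) x :=
    intervalIntegral.integral_hasDerivAt_right
      ((intervalIntegrable_iff_integrableOn_Ioc_of_le hax.le).2 (hg.mono_set Ioc_subset_Ioi_self))
      ⟨Ioi a, Ioi_mem_nhds hax, hg.aestronglyMeasurable⟩ hgx
  refine (zero_sub (g x) ▸ (hasDerivAt_const x (∫ t in Ioi a, g t)).sub hprim)
    |>.congr_of_eventuallyEq ?_
  filter_upwards [Ioi_mem_nhds hax] with y hy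
  rw [Pi.sub_apply, ← intervalIntegral.integral_Ioi_sub_Ioi hg hy.le, sub_sub_cancel]

theorem HasDerivAt.ringInverse {𝕜 𝔸 : Type*} [NontriviallyNormedField 𝕜] [NormedRing 𝔸]
    [HasSummableGeomSeries 𝔸] [NormedAlgebra 𝕜 𝔸] {f : 𝕜 → 𝔸} {f' : 𝔸} {x : 𝕜}
    (hf : HasDerivAt f f' x) (hx : IsUnit (f x)) :
    HasDerivAt (fun y => Ring.inverse (f y))
      (-(Ring.inverse (f x) * f' * Ring.inverse (f x))) x := by
  obtain ⟨u, hu⟩ := hx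
  have hinv := hasFDerivAt_ringInverse (𝕜 := 𝕜) u
  rw [hu] at hinv
  simpa [← hu, Function.comp_def] using hinv.comp_hasDerivAt x hf

theorem HasDerivAt.riccati_substitution {V a U : ℝ → ℂ} {x : ℝ}
    (hV : HasDerivAt V (2 * a x + 2 * V x ^ 2) x) (hU : HasDerivAt U (-2 * V x * U x) x) :
    HasDerivAt (fun y => -2 * V y * U y) (-4 * a x * U x) x :=
  ((hV.const_mul (-2)).mul hU).congr_deriv (by ring)

-- Both sides become `2 * (A + R * A * R)` after multiplying by `1 - R * R` on the left and right.
theorem inverse_one_sub_mul_self_conj_identity {ℛ : Type*} [Ring ℛ] {R A S P : ℛ}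
    (hS : S * (1 - R * R) = 1) (hS' : (1 - R * R) * S = 1)
    (hP : P * (1 + R) = 1) (hP' : (1 + R) * P = 1) :
    A * S + S * A + S * ((A * R + R * A) * R + R * (A * R + R * A)) * S
      = 2 * (P * A * P + S * (A * R + R * A) * S) := by
  set W := 1 - R * R with hW
  have hPW : P * W = 1 - R := by
    rw [hW, show 1 - R * R = (1 + R) * (1 - R) by noncomm_ring, ← mul_assoc, hP, one_mul]
  have hWP : W * P = 1 - R := by
    rw [hW, show 1 - R * R = (1 - R) * (1 + R) by noncomm_ring, mul_assoc, hP', mul_one]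
  have hWu : IsUnit W := ⟨⟨W, S, hS', hS⟩, rfl⟩
  refine hWu.mul_left_cancel (hWu.mul_right_cancel ?_)
  calc _ = W * A * (S * W) + (W * S) * A * W
        + (W * S) * ((A * R + R * A) * R + R * (A * R + R * A)) * (S * W) := by noncomm_ring
    _ = 2 * ((W * P) * A * (P * W) + (W * S) * (A * R + R * A) * (S * W)) := by
        rw [hS, hS', hWP, hPW, hW]; noncomm_ring
    _ = _ := by noncomm_ring

section Semigroup

variable {H : Type*} [NormedAddCommGroup H] [InnerProductSpace ℂ H] [CompleteSpace H]

theorem hasDerivAt_expA (A : H →L[ℂ] H) (x : ℝ) :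
    HasDerivAt (expA A) (-(A * expA A x)) x := by
  have h : expA A = fun t : ℝ => NormedSpace.exp (t • -A) := by
    ext1 t
    rw [expA, smul_neg, neg_smul, ← Complex.coe_smul]
  simpa [h] using hasDerivAt_exp_smul_const' (𝕂 := ℝ) (-A) x

theorem commute_expA (A : H →L[ℂ] H) (t : ℝ) : Commute A (expA A t) :=
  ((Commute.refl A).smul_right _).exp_right

theorem continuous_expA (A : H →L[ℂ] H) : Continuous (expA A) :=
  continuous_iff_continuousAt.2 fun x => (hasDerivAt_expA A x).continuousAt

theorem continuous_expA_mul_mul_expA (A B : H →L[ℂ] H) :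
    Continuous fun t => expA A t * B * expA A t :=
  ((continuous_expA A).mul continuous_const).mul (continuous_expA A)

theorem HasDerivAt.expA_mul_mul_expA {A : H →L[ℂ] H} {S : ℝ → H →L[ℂ] H} {S' : H →L[ℂ] H}
    {x : ℝ} (hS : HasDerivAt S S' x) :
    HasDerivAt (fun y => expA A y * S y * expA A y)
      (expA A x * (S' - (A * S x + S x * A)) * expA A x) x := by
  refine (((hasDerivAt_expA A x).mul hS).mul (hasDerivAt_expA A x)).congr_deriv ?_
  nth_rw 1 [(commute_expA A x).eq]
  noncomm_ring

variable {A : H →L[ℂ] H} {M ε : ℝ} (hε : 0 < ε)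
  (hdecay : ∀ t : ℝ, 0 ≤ t → ‖expA A t‖ ≤ M * Real.exp (-ε * t))
include hdecay

theorem isBigO_expA_mul_mul_expA (B : H →L[ℂ] H) :
    (fun t => expA A t * B * expA A t) =O[atTop] fun t => Real.exp (-(2 * ε) * t) := by
  refine IsBigO.of_bound (M ^ 2 * ‖B‖) ?_
  filter_upwards [eventually_ge_atTop 0] with t ht
  have hE := hdecay t ht
  have hM : 0 ≤ M * Real.exp (-ε * t) := (norm_nonneg _).trans hE
  calc ‖expA A t * B * expA A t‖ ≤ ‖expA A t‖ * ‖B‖ * ‖expA A t‖ := norm_mul₃_le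
    _ ≤ (M * Real.exp (-ε * t)) * ‖B‖ * (M * Real.exp (-ε * t)) := by gcongr
    _ = M ^ 2 * ‖B‖ * ‖Real.exp (-(2 * ε) * t)‖ := by
        rw [Real.norm_eq_abs, Real.abs_exp, show -(2 * ε) * t = -ε * t + -ε * t by ring,
          Real.exp_add]
        ring

include hε

theorem integrableOn_expA_mul_mul_expA (B : H →L[ℂ] H) (x : ℝ) :
    IntegrableOn (fun t => expA A t * B * expA A t) (Ioi x) :=
  (integrableOn_Ici_iff_integrableOn_Ioi).mp <|
    ((continuous_expA_mul_mul_expA A B).locallyIntegrable.locallyIntegrableOn _)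
      |>.integrableOn_of_isBigO_atTop (isBigO_expA_mul_mul_expA hdecay B)
        ⟨Ioi 0, Ioi_mem_atTop 0, exp_neg_integrableOn_Ioi 0 (by positivity)⟩

theorem tendsto_expA_mul_mul_expA (B : H →L[ℂ] H) :
    Tendsto (fun t => expA A t * B * expA A t) atTop (𝓝 0) :=
  (isBigO_expA_mul_mul_expA hdecay B).trans_tendsto
    (Real.tendsto_exp_atBot.comp (tendsto_id.const_mul_atTop_of_neg (by linarith)))

theorem hasDerivAt_Rop (B : H →L[ℂ] H) (x : ℝ) :
    HasDerivAt (Rop A B) (-(expA A x * B * expA A x)) x :=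
  hasDerivAt_setIntegral_Ioi (integrableOn_expA_mul_mul_expA hε hdecay B (x - 1)) (by linarith)
    (continuous_expA_mul_mul_expA A B).continuousAt

-- Lyapunov equation: integrate `d/dt (e^{-tA} B e^{-tA}) = -(A * _ + _ * A)` over `(x, ∞)`.
theorem mul_Rop_add_Rop_mul (B : H →L[ℂ] H) (x : ℝ) :
    A * Rop A B x + Rop A B x * A = expA A x * B * expA A x := by
  have hint := integrableOn_expA_mul_mul_expA hε hdecay B x
  have hderiv : ∀ t ∈ Ici x, HasDerivAt (fun s => expA A s * B * expA A s)
      (-(A * (expA A t * B * expA A t) + expA A t * B * expA A t * A)) t := fun t _ => by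
    refine ((hasDerivAt_const t B).expA_mul_mul_expA).congr_deriv ?_
    have hc := commute_expA A t
    simp only [zero_sub, mul_neg, neg_mul, mul_add, add_mul, mul_assoc, hc.left_comm, ← hc.eq]
  have hftc := integral_Ioi_of_hasDerivAt_of_tendsto' hderiv
    ((hint.const_mul A).add (hint.mul_const A)).neg (tendsto_expA_mul_mul_expA hε hdecay B)
  rw [integral_neg, integral_add (hint.const_mul A) (hint.mul_const A),
    integral_const_mul_of_integrable hint, integral_mul_const_of_integrable hint, zero_sub] at hftc
  exact neg_injective hftc

end Semigroup

section Riccati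

variable {H : Type*} [NormedAddCommGroup H] [InnerProductSpace ℂ H] [CompleteSpace H]
  {A : H →L[ℂ] H} {M ε : ℝ} (hε : 0 < ε)
  (hdecay : ∀ t : ℝ, 0 ≤ t → ‖expA A t‖ ≤ M * Real.exp (-ε * t))
include hε hdecay

theorem hasDerivAt_expA_mul_inverse_one_sub_Rop_mul_self_mul_expA {B : H →L[ℂ] H} {x : ℝ}
    (hp : IsUnit (1 + Rop A B x)) (hm : IsUnit (1 - Rop A B x)) :
    HasDerivAt (fun y => expA A y * Ring.inverse (1 - Rop A B y * Rop A B y) * expA A y)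
      (-(2 * (expA A x * (Ring.inverse (1 + Rop A B x) * A * Ring.inverse (1 + Rop A B x)
        + Ring.inverse (1 - Rop A B x * Rop A B x) * (expA A x * B * expA A x)
          * Ring.inverse (1 - Rop A B x * Rop A B x)) * expA A x))) x := by
  have hR := hasDerivAt_Rop hε hdecay B x
  have hlyap := mul_Rop_add_Rop_mul hε hdecay B x
  set R := Rop A B x
  set F := expA A x * B * expA A x
  have hW : HasDerivAt (fun y => 1 - Rop A B y * Rop A B y) (F * R + R * F) x :=
    ((hR.mul hR).const_sub 1).congr_deriv (by noncomm_ring)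
  have hunit : IsUnit (1 - R * R) := by
    rw [show 1 - R * R = (1 - R) * (1 + R) by noncomm_ring]
    exact hm.mul hp
  refine (hW.ringInverse hunit).expA_mul_mul_expA.congr_deriv ?_
  have key := inverse_one_sub_mul_self_conj_identity (A := A) (Ring.inverse_mul_cancel _ hunit)
    (Ring.mul_inverse_cancel _ hunit) (Ring.inverse_mul_cancel _ hp) (Ring.mul_inverse_cancel _ hp)
  set S := Ring.inverse (1 - R * R)
  rw [← hlyap]
  calc _ = -(expA A x * (A * S + S * A + S * ((A * R + R * A) * R + R * (A * R + R * A)) * S)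
        * expA A x) := by noncomm_ring
    _ = _ := by rw [key]; noncomm_ring

theorem hasDerivAt_apply_expA_mul_inverse_one_sub_Rop_mul_self_mul_expA {C : H →L[ℂ] ℂ} {b : H}
    {x : ℝ} (hp : IsUnit (1 + Rop A (C.smulRight b) x))
    (hm : IsUnit (1 - Rop A (C.smulRight b) x)) :
    HasDerivAt (fun y => C ((expA A y *
        Ring.inverse (1 - Rop A (C.smulRight b) y * Rop A (C.smulRight b) y) * expA A y) b))
      (-(2 * C ((expA A x * Ring.inverse (1 + Rop A (C.smulRight b) x) * A *
          Ring.inverse (1 + Rop A (C.smulRight b) x) * expA A x) b))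
        - 2 * C ((expA A x *
          Ring.inverse (1 - Rop A (C.smulRight b) x * Rop A (C.smulRight b) x) * expA A x) b) ^ 2)
      x := by
  have h := hasDerivAt_expA_mul_inverse_one_sub_Rop_mul_self_mul_expA hε hdecay hp hm
  set E := expA A x
  set P := Ring.inverse (1 + Rop A (C.smulRight b) x)
  set S := Ring.inverse (1 - Rop A (C.smulRight b) x * Rop A (C.smulRight b) x)
  refine (((C.comp (ContinuousLinearMap.apply ℂ H b)).restrictScalars ℝ).hasFDerivAt
    |>.comp_hasDerivAt x h).congr_deriv ?_
  rw [show -(2 * (E * (P * A * P + S * (E * C.smulRight b * E) * S) * E))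
      = -(2 * (E * P * A * P * E)) - 2 * ((E * S * E) * C.smulRight b * (E * S * E)) by
    noncomm_ring]
  simp only [ContinuousLinearMap.coe_restrictScalars', ContinuousLinearMap.comp_apply,
    ContinuousLinearMap.apply_apply, mul_apply_eq_comp, ContinuousLinearMap.ofNat_apply,
    ContinuousLinearMap.smulRight_apply, map_smul, map_sub, map_neg,
    ContinuousLinearMap.map_smul_of_tower, nsmul_eq_mul, Nat.cast_ofNat, smul_eq_mul, sq]
  ring

end Riccati

theorem schroedinger_equation_for_U_general
    {H : Type*} [NormedAddCommGroup H] [InnerProductSpace ℂ H] [CompleteSpace H]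
    (A : H →L[ℂ] H) (b : H) (C : H →L[ℂ] ℂ)
    (M ε : ℝ) (hε : 0 < ε)
    (hdecay : ∀ t : ℝ, 0 ≤ t → ‖expA A t‖ ≤ M * Real.exp (-ε * t))
    (x₀ : ℝ)
    (hinvp : ∀ x ∈ Set.Ioi x₀, IsUnit (1 + Rop A (C.smulRight b) x))
    (hinvm : ∀ x ∈ Set.Ioi x₀, IsUnit (1 - Rop A (C.smulRight b) x))
    (V : ℝ → ℂ)
    (hV : ∀ x : ℝ, V x = -(C ((expA A x *
      Ring.inverse (1 - Rop A (C.smulRight b) x * Rop A (C.smulRight b) x) *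
      expA A x) b)))
    (hVint : IntegrableOn V (Set.Ioi x₀))
    (a : ℝ → ℂ)
    (ha : ∀ x : ℝ, a x = C ((expA A x *
      Ring.inverse (1 + Rop A (C.smulRight b) x) * A *
      Ring.inverse (1 + Rop A (C.smulRight b) x) * expA A x) b))
    (U : ℝ → ℂ)
    (hU : ∀ x : ℝ, U x = Complex.exp (2 * ∫ t in Set.Ioi x, V t)) :
    ∃ U' : ℝ → ℂ,
      (∀ x ∈ Set.Ioi x₀, HasDerivAt U (U' x) x) ∧
      (∀ x ∈ Set.Ioi x₀, HasDerivAt U' (-4 * a x * U x) x) := by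
  have hVd : ∀ x ∈ Ioi x₀, HasDerivAt V (2 * a x + 2 * V x ^ 2) x := fun x hx => by
    have h := (hasDerivAt_apply_expA_mul_inverse_one_sub_Rop_mul_self_mul_expA hε hdecay
      (hinvp x hx) (hinvm x hx)).fun_neg
    rw [← funext hV] at h
    exact h.congr_deriv (by rw [ha, hV]; ring)
  have hUd : ∀ x ∈ Ioi x₀, HasDerivAt U (-2 * V x * U x) x := fun x hx => by
    have hW := hasDerivAt_setIntegral_Ioi hVint hx (hVd x hx).continuousAt
    rw [funext hU]
    exact ((hW.const_mul 2).cexp).congr_deriv (by ring)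
  exact ⟨fun y => -2 * V y * U y, hUd, fun x hx => (hVd x hx).riccati_substitution (hUd x hx)⟩

/-- With the rank-one operator `BC : v ↦ C(v)·b` and `R_x` as above, if `I ± R_x` are
invertible for all `x ∈ (x₀,∞)` and `V(x) = −C(exp(−xA)·(I − R_x²)⁻¹·exp(−xA)·b)` is
integrable on `(x₀,∞)`, then `U(x) = exp(2·∫_x^∞ V(t) dt)` is twice differentiable on
`(x₀,∞)` and satisfies `U″(x) = −4·a(x)·U(x)`, where
`a(x) = C(exp(−xA)·(I+R_x)⁻¹·A·(I+R_x)⁻¹·exp(−xA)·b)`. -/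
theorem schroedinger_equation_for_U
    {H : Type*} [NormedAddCommGroup H] [InnerProductSpace ℂ H] [CompleteSpace H]
    (A : H →L[ℂ] H) (b : H) (C : H →L[ℂ] ℂ)
    (M ε : ℝ) (hM : 0 < M) (hε : 0 < ε)
    (hdecay : ∀ t : ℝ, 0 ≤ t → ‖expA A t‖ ≤ M * Real.exp (-ε * t))
    (x₀ : ℝ)
    (hinvp : ∀ x ∈ Set.Ioi x₀, IsUnit (1 + Rop A (C.smulRight b) x))
    (hinvm : ∀ x ∈ Set.Ioi x₀, IsUnit (1 - Rop A (C.smulRight b) x))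
    (V : ℝ → ℂ)
    (hV : ∀ x : ℝ, V x = -(C ((expA A x *
      Ring.inverse (1 - Rop A (C.smulRight b) x * Rop A (C.smulRight b) x) *
      expA A x) b)))
    (hVint : IntegrableOn V (Set.Ioi x₀))
    (a : ℝ → ℂ)
    (ha : ∀ x : ℝ, a x = C ((expA A x *
      Ring.inverse (1 + Rop A (C.smulRight b) x) * A *
      Ring.inverse (1 + Rop A (C.smulRight b) x) * expA A x) b))
    (U : ℝ → ℂ)
    (hU : ∀ x : ℝ, U x = Complex.exp (2 * ∫ t in Set.Ioi x, V t)) :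
    ∃ U' : ℝ → ℂ,
      (∀ x ∈ Set.Ioi x₀, HasDerivAt U (U' x) x) ∧
      (∀ x ∈ Set.Ioi x₀, HasDerivAt U' (-4 * a x * U x) x) :=
  schroedinger_equation_for_U_general A b C M ε hε hdecay x₀ hinvp hinvm V hV hVint a ha U hU
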